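/- Over any field F and for 1 ≤ d ≤ n, every point a ∈ F^n in the order-2 zero set V_2(e_d) of the degree-d elementary symmetric polynomial has at most d-1 distinct coordinate values; that is, |{a_1,...,a_n}| ≤ d - 1 for all a ∈ V_2(e_d). -/

import Mathlib

/-!
At `a`, `∂ e_d / ∂ x_i` is `e_{d-1}` of the multiset `m` of coordinates with one copy of `a i`
removed. For a set `B` of distinct coordinate values and `x ∈ B`, the Pascal rule
`e_{k+1}(x :: M) = e_{k+1}(M) + x e_k(M)` with `M = m - B` turns the vanishing for `B \ {x}` into
`e_{k+1}(M) + x e_k(M) = 0`; subtracting this for two distinct `x, y ∈ B` gives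
`(x - y) e_k(M) = 0`. Inductively `e_{d-|B|}(m - B) = 0` whenever `1 ≤ |B| ≤ d`, and `|B| = d`
would give `e_0 = 1 = 0`.
-/

open MvPolynomial Finset

namespace Multiset

variable {R : Type*}

theorem esymm_zero_right [CommSemiring R] (s : Multiset R) : s.esymm 0 = 1 := by
  simp [esymm, powersetCard_zero_left]

theorem esymm_zero_left_succ [CommSemiring R] (k : ℕ) : (0 : Multiset R).esymm (k + 1) = 0 := by
  simp [esymm, powersetCard_zero_right]

theorem esymm_cons_succ [CommSemiring R] (x : R) (s : Multiset R) (k : ℕ) :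
    (x ::ₘ s).esymm (k + 1) = s.esymm (k + 1) + x * s.esymm k := by
  simp [esymm, powersetCard_cons, map_map, sum_map_mul_left]

theorem _root_.map_multiset_esymm {S F : Type*} [CommSemiring R] [CommSemiring S]
    [FunLike F R S] [RingHomClass F R S] (f : F) (s : Multiset R) (k : ℕ) :
    f (s.esymm k) = (s.map f).esymm k := by
  simp [esymm, map_multiset_sum, map_multiset_prod, powersetCard_map, map_map]

theorem esymm_sub_eq_zero_of_esymm_erase_eq_zero [CommRing R] [IsDomain R] [DecidableEq R]
    {m : Multiset R} {e : ℕ} (hm : ∀ x ∈ m, (m.erase x).esymm e = 0) {t : ℕ} (hte : t ≤ e)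
    {b : Finset R} (hbm : b.val ≤ m) (hb : #b = t + 1) : (m - b.val).esymm (e - t) = 0 := by
  induction t generalizing b with
  | zero =>
    obtain ⟨x, rfl⟩ := Finset.card_eq_one.1 hb
    simpa using hm x (singleton_le.1 hbm)
  | succ t ih =>
    have hcons : ∀ x ∈ b,
        (m - b.val).esymm (e - (t + 1) + 1) + x * (m - b.val).esymm (e - (t + 1)) = 0 := by
      intro x hx
      have hsub : m - (b.erase x).val = x ::ₘ (m - b.val) := by
        rw [erase_val, ← sub_singleton, tsub_tsub_assoc hbm (singleton_le.2 hx), add_comm,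
          singleton_add]
      have := ih (by omega) ((val_le_iff.2 (b.erase_subset x)).trans hbm)
        (by rw [Finset.card_erase_of_mem hx, hb]; rfl)
      rwa [hsub, show e - t = e - (t + 1) + 1 by omega, esymm_cons_succ] at this
    obtain ⟨x, hx, y, hy, hxy⟩ := one_lt_card.1 (by omega : 1 < #b)
    have hdiff : (x - y) * (m - b.val).esymm (e - (t + 1)) = 0 := by
      linear_combination hcons x hx - hcons y hy
    exact (mul_eq_zero.1 hdiff).resolve_left (sub_ne_zero.2 hxy)

theorem card_toFinset_le_of_esymm_erase_eq_zero [CommRing R] [IsDomain R] [DecidableEq R]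
    {m : Multiset R} {e : ℕ} (hm : ∀ x ∈ m, (m.erase x).esymm e = 0) : #m.toFinset ≤ e := by
  by_contra! h
  obtain ⟨b, hbm, hb⟩ := exists_subset_card_eq (show e + 1 ≤ #m.toFinset by omega)
  have hbm' : b.val ≤ m := (le_iff_subset b.nodup).2 fun x hx => mem_toFinset.1 (hbm hx)
  have := esymm_sub_eq_zero_of_esymm_erase_eq_zero hm le_rfl hbm' hb
  rw [Nat.sub_self, esymm_zero_right] at this
  exact one_ne_zero this

end Multiset

theorem Finset.val_eq_cons_erase {α : Type*} [DecidableEq α] {s : Finset α} {i : α}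
    (h : i ∈ s) :
    s.val = i ::ₘ (s.erase i).val := by
  rw [erase_val, Multiset.cons_erase h]

theorem Derivation.map_multiset_esymm_eq_zero {R A M : Type*} [CommSemiring R] [CommSemiring A]
    [Algebra R A] [AddCommMonoid M] [Module A M] [Module R M] (D : Derivation R A M)
    {s : Multiset A} (hs : ∀ x ∈ s, D x = 0) (k : ℕ) : D (s.esymm k) = 0 := by
  induction s using Multiset.induction_on generalizing k with
  | empty => cases k <;> simp [Multiset.esymm_zero_right, Multiset.esymm_zero_left_succ]
  | cons x s ih =>
    have hs' : ∀ y ∈ s, D y = 0 := fun y hy => hs y (Multiset.mem_cons_of_mem hy)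
    cases k with
    | zero => simp [Multiset.esymm_zero_right]
    | succ k =>
      rw [Multiset.esymm_cons_succ, map_add, Derivation.leibniz,
        hs x (Multiset.mem_cons_self x s), ih hs', ih hs']
      simp

theorem MvPolynomial.pderiv_esymm_succ {σ R : Type*} [CommSemiring R] [Fintype σ] [DecidableEq σ]
    (i : σ) (k : ℕ) :
    pderiv i (esymm σ R (k + 1)) = ((univ.erase i).val.map X).esymm k := by
  have hvanish :
      ∀ k, pderiv i (((univ.erase i).val.map (X : σ → MvPolynomial σ R)).esymm k) = 0 :=
    (pderiv i).map_multiset_esymm_eq_zero <| by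
      simp only [Multiset.mem_map, mem_val, mem_erase]
      rintro _ ⟨j, ⟨hji, -⟩, rfl⟩
      exact pderiv_X_of_ne hji
  rw [esymm_eq_multiset_esymm, Finset.val_eq_cons_erase (mem_univ i), Multiset.map_cons,
    Multiset.esymm_cons_succ, map_add, Derivation.leibniz, hvanish, hvanish, pderiv_X_self]
  simp

theorem stmt16_general {F : Type*} [Field F] [DecidableEq F] (n d : ℕ) (hd : 1 ≤ d)
    (a : Fin n → F)
    (h1 : ∀ i : Fin n, eval a (pderiv i (esymm (Fin n) F d)) = 0) :
    (Finset.univ.image a).card ≤ d - 1 := by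
  obtain ⟨e, rfl⟩ : ∃ e, d = e + 1 := ⟨d - 1, by omega⟩
  have hvalues : ∀ x ∈ univ.val.map a, ((univ.val.map a).erase x).esymm e = 0 := by
    intro x hx
    obtain ⟨i, -, rfl⟩ := Multiset.mem_map.1 hx
    have hi := h1 i
    rw [pderiv_esymm_succ, map_multiset_esymm, Multiset.map_map] at hi
    rw [Finset.val_eq_cons_erase (mem_univ i), Multiset.map_cons, Multiset.erase_cons_head]
    simpa [Function.comp_def] using hi
  exact Multiset.card_toFinset_le_of_esymm_erase_eq_zero hvalues

theorem stmt16 {F : Type*} [Field F] [DecidableEq F] (n d : ℕ) (hd : 1 ≤ d) (hdn : d ≤ n)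
    (a : Fin n → F) (h0 : eval a (esymm (Fin n) F d) = 0)
    (h1 : ∀ i : Fin n, eval a (pderiv i (esymm (Fin n) F d)) = 0) :
    (Finset.univ.image a).card ≤ d - 1 :=
  stmt16_general n d hd a h1
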